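/- In a truncated archimedean vector lattice G, for every g ≥ 0 and natural number m, g ∧ m = Σ_{n=1}^{m} ((g ⊖ (n−1))̄), where g ⊖ 0 := g. -/

import Mathlib

/-- A truncation on a (lattice-ordered real) vector lattice `G`: a unary operation
`trunc` on the positive cone satisfying the axioms (T1)–(T3). -/
structure Truncation (G : Type*) [AddCommGroup G] [Lattice G] [Module ℝ G] where
  trunc : G → G
  /-- (T1): `g ⊓ h̄ ≤ ḡ ≤ g` for `g, h ≥ 0`. -/
  inf_trunc_le : ∀ g h : G, 0 ≤ g → 0 ≤ h → g ⊓ trunc h ≤ trunc g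
  trunc_le_self : ∀ g : G, 0 ≤ g → trunc g ≤ g
  /-- (T2): if `ḡ = 0` then `g = 0`. -/
  eq_zero_of_trunc_eq_zero : ∀ g : G, 0 ≤ g → trunc g = 0 → g = 0
  /-- (T3): if `n g = (n g)‾` for all `n` then `g = 0`. -/
  eq_zero_of_forall_trunc_eq : ∀ g : G, 0 ≤ g →
    (∀ n : ℕ, (n : ℝ) • g = trunc ((n : ℝ) • g)) → g = 0

namespace Truncation

variable {G : Type*} [AddCommGroup G] [Lattice G] [Module ℝ G]

/-- `g ∧ r := r • (g/r)‾` for real `r > 0` (and `g ∧ 0 := 0`). -/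
noncomputable def wedge (T : Truncation G) (g : G) (r : ℝ) : G :=
  r • T.trunc (r⁻¹ • g)

/-- `g ⊖ r := r • ((g/r) - (g/r)‾)` for real `r > 0`, and `g ⊖ 0 := g`. -/
noncomputable def ominus (T : Truncation G) (g : G) (r : ℝ) : G :=
  if r = 0 then g else r • (r⁻¹ • g - T.trunc (r⁻¹ • g))

end Truncation

/-!
The key identity is `g ∧ (r + s) = g ∧ r + (g - g ∧ r) ∧ s`. Writing `t = r + s`,
`p = g ∧ r` and `q = (g - p) ∧ s`, both inequalities in `g ∧ t = p + q` come from (T1) applied after rescaling by `1/s` resp. `1/t`: for `≤`, the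
element `(g ∧ t - p)/s` lies below `(g/t)‾` and `(g - p)/s`; for `≥`, the element
`(p + q)/t` lies below `g/t ⊓ ((g/r)‾ ⊔ ((g - p)/s)‾)`, and distributivity splits this
infimum into two pieces bounded by (T1). Induction on `m` with `s = 1` then gives the
formula, because `g ⊖ n = g - g ∧ n` and `x ∧ 1 = x̄`.

The order of a lattice-ordered group with an `ℝ`-module structure is only known to be
compatible with scaling by natural numbers and their inverses (the module structure need not
be the ordered one), which is why `r` and `s` are natural numbers throughout.
-/

section LatticeOrderedAddCommGroup

variable {G : Type*} [AddCommGroup G] [Lattice G] [CovariantClass G G (· + ·) (· ≤ ·)]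
  {a b c : G}

lemma inf_add_eq_zero (ha : 0 ≤ a) (hb : 0 ≤ b) (hc : 0 ≤ c) (hab : a ⊓ b = 0)
    (hac : a ⊓ c = 0) : a ⊓ (b + c) = 0 := by
  have h_le_c : a ⊓ (b + c) ≤ c :=
    calc a ⊓ (b + c) ≤ (a + c) ⊓ (b + c) := inf_le_inf_right _ (le_add_of_nonneg_right hc)
      _ = c := by rw [← inf_add, hab, zero_add]
  exact le_antisymm (hac ▸ le_inf inf_le_left h_le_c) (le_inf ha (add_nonneg hb hc))

lemma inf_nsmul_eq_zero (ha : 0 ≤ a) (hb : 0 ≤ b) (hab : a ⊓ b = 0) (n : ℕ) :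
    a ⊓ n • b = 0 := by
  induction n with
  | zero => simpa using ha
  | succ n ih => rw [succ_nsmul]; exact inf_add_eq_zero ha (nsmul_nonneg hb n) hb ih hab

lemma nonneg_of_nsmul_nonneg {n : ℕ} (hn : n ≠ 0) (h : 0 ≤ n • a) : 0 ≤ a := by
  have hneg_le : a⁻ ≤ n • a⁺ :=
    calc a⁻ ≤ n • a⁻ := le_self_nsmul (negPart_nonneg a) hn
      _ ≤ n • a⁺ := by rwa [← sub_nonneg, ← nsmul_sub, posPart_sub_negPart]
  have hneg : a⁻ = 0 := by
    rw [← inf_eq_left.mpr hneg_le]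
    exact inf_nsmul_eq_zero (negPart_nonneg a) (posPart_nonneg a)
      (by rw [inf_comm, posPart_inf_negPart_eq_zero]) n
  rw [← posPart_sub_negPart a, hneg, sub_zero]
  exact posPart_nonneg a

end LatticeOrderedAddCommGroup

section NatCastSMul

variable {G : Type*} [AddCommGroup G] [Lattice G] [CovariantClass G G (· + ·) (· ≤ ·)]
  [Module ℝ G] {x y : G} {k : ℕ}

lemma natCast_smul_le_natCast_smul (k : ℕ) (h : x ≤ y) : (k : ℝ) • x ≤ (k : ℝ) • y := by
  simpa only [Nat.cast_smul_eq_nsmul] using nsmul_le_nsmul_right h k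

lemma le_of_natCast_smul_le_natCast_smul (hk : k ≠ 0) (h : (k : ℝ) • x ≤ (k : ℝ) • y) :
    x ≤ y := by
  rw [← sub_nonneg] at h ⊢
  exact nonneg_of_nsmul_nonneg hk (by rwa [← smul_sub, Nat.cast_smul_eq_nsmul] at h)

lemma inv_natCast_smul_le_iff (hk : k ≠ 0) : (k : ℝ)⁻¹ • x ≤ y ↔ x ≤ (k : ℝ) • y := by
  have hk' : (k : ℝ) ≠ 0 := Nat.cast_ne_zero.mpr hk
  refine ⟨fun h ↦ ?_, fun h ↦ le_of_natCast_smul_le_natCast_smul hk ?_⟩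
  · simpa only [smul_inv_smul₀ hk'] using natCast_smul_le_natCast_smul k h
  · rwa [smul_inv_smul₀ hk']

lemma le_inv_natCast_smul_iff (hk : k ≠ 0) : x ≤ (k : ℝ)⁻¹ • y ↔ (k : ℝ) • x ≤ y := by
  have hk' : (k : ℝ) ≠ 0 := Nat.cast_ne_zero.mpr hk
  refine ⟨fun h ↦ ?_, fun h ↦ le_of_natCast_smul_le_natCast_smul hk ?_⟩
  · simpa only [smul_inv_smul₀ hk'] using natCast_smul_le_natCast_smul k h
  · rwa [smul_inv_smul₀ hk']

lemma inv_natCast_smul_le_inv_natCast_smul (h : x ≤ y) : (k : ℝ)⁻¹ • x ≤ (k : ℝ)⁻¹ • y := by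
  rcases eq_or_ne k 0 with rfl | hk
  · simp
  · rw [inv_natCast_smul_le_iff hk, smul_inv_smul₀ (Nat.cast_ne_zero.mpr hk)]
    exact h

lemma inv_natCast_smul_nonneg (k : ℕ) (hx : 0 ≤ x) : 0 ≤ (k : ℝ)⁻¹ • x := by
  simpa using inv_natCast_smul_le_inv_natCast_smul (k := k) hx

lemma inv_natCast_smul_anti {r t : ℕ} (hr : r ≠ 0) (hrt : r ≤ t) (hx : 0 ≤ x) :
    (t : ℝ)⁻¹ • x ≤ (r : ℝ)⁻¹ • x := by
  rw [le_inv_natCast_smul_iff hr, Nat.cast_smul_eq_nsmul]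
  calc r • ((t : ℝ)⁻¹ • x) ≤ t • ((t : ℝ)⁻¹ • x) :=
        nsmul_le_nsmul_left (inv_natCast_smul_nonneg t hx) hrt
    _ = x := by rw [← Nat.cast_smul_eq_nsmul ℝ, smul_inv_smul₀ (Nat.cast_ne_zero.mpr (by omega))]

end NatCastSMul

namespace Truncation

variable {G : Type*} [AddCommGroup G] [Lattice G] [Module ℝ G] (T : Truncation G)

lemma trunc_mono {x y : G} (hx : 0 ≤ x) (hxy : x ≤ y) : T.trunc x ≤ T.trunc y := by
  simpa only [inf_eq_right.mpr ((T.trunc_le_self x hx).trans hxy)] using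
    T.inf_trunc_le y x (hx.trans hxy) hx

@[simp]
lemma wedge_zero (g : G) : T.wedge g 0 = 0 := by
  simp [wedge]

@[simp]
lemma wedge_one (g : G) : T.wedge g 1 = T.trunc g := by
  simp [wedge]

lemma ominus_eq_sub_wedge (g : G) (r : ℝ) : T.ominus g r = g - T.wedge g r := by
  rcases eq_or_ne r 0 with rfl | hr
  · simp [ominus]
  · rw [ominus, if_neg hr, smul_sub, smul_inv_smul₀ hr, wedge]

variable [CovariantClass G G (· + ·) (· ≤ ·)] {g : G}

lemma wedge_le_self (hg : 0 ≤ g) (k : ℕ) : T.wedge g k ≤ g := by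
  rcases eq_or_ne k 0 with rfl | hk
  · simpa using hg
  · rw [wedge, ← le_inv_natCast_smul_iff hk]
    exact T.trunc_le_self _ (inv_natCast_smul_nonneg k hg)

lemma le_wedge_natCast_iff {x y : G} {k : ℕ} (hk : k ≠ 0) :
    x ≤ T.wedge y k ↔ (k : ℝ)⁻¹ • x ≤ T.trunc ((k : ℝ)⁻¹ • y) := by
  rw [wedge, inv_natCast_smul_le_iff hk]

lemma wedge_natCast_add_le (hg : 0 ≤ g) {r s : ℕ} (hr : r ≠ 0) (hs : s ≠ 0) :
    T.wedge g (r + s : ℕ) ≤ T.wedge g r + T.wedge (g - T.wedge g r) s := by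
  set α := T.trunc (((r + s : ℕ) : ℝ)⁻¹ • g)
  have hα : α ≤ T.trunc ((r : ℝ)⁻¹ • g) :=
    T.trunc_mono (inv_natCast_smul_nonneg _ hg) (inv_natCast_smul_anti hr (by omega) hg)
  have h_le_smul : T.wedge g (r + s : ℕ) - T.wedge g r ≤ (s : ℝ) • α := by
    have h_split : ((r + s : ℕ) : ℝ) • α = (r : ℝ) • α + (s : ℝ) • α := by
      rw [Nat.cast_add, add_smul]
    rw [wedge, wedge, h_split, sub_le_iff_le_add']
    exact add_le_add_left (natCast_smul_le_natCast_smul r hα) _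
  have h_le_sub : T.wedge g (r + s : ℕ) - T.wedge g r ≤ g - T.wedge g r :=
    sub_le_sub_right (T.wedge_le_self hg _) _
  rw [← sub_le_iff_le_add', T.le_wedge_natCast_iff hs]
  rw [← inv_natCast_smul_le_iff hs] at h_le_smul
  exact (le_inf (inv_natCast_smul_le_inv_natCast_smul h_le_sub) h_le_smul).trans
    (T.inf_trunc_le _ _ (inv_natCast_smul_nonneg s (sub_nonneg.mpr (T.wedge_le_self hg r)))
      (inv_natCast_smul_nonneg _ hg))

lemma le_wedge_natCast_add (hg : 0 ≤ g) {r s : ℕ} (hrs : r + s ≠ 0) :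
    T.wedge g r + T.wedge (g - T.wedge g r) s ≤ T.wedge g (r + s : ℕ) := by
  let _ : DistribLattice G := AddCommGroup.toDistribLattice G
  set p := T.wedge g r
  set u := T.trunc ((r : ℝ)⁻¹ • g)
  set v := T.trunc ((s : ℝ)⁻¹ • (g - p))
  have hp : p ≤ g := T.wedge_le_self hg r
  have h_le_g : p + T.wedge (g - p) s ≤ g :=
    le_sub_iff_add_le'.mp (T.wedge_le_self (sub_nonneg.mpr hp) s)
  have h_le_sup : p + T.wedge (g - p) s ≤ ((r + s : ℕ) : ℝ) • (u ⊔ v) := by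
    rw [Nat.cast_add, add_smul]
    exact add_le_add (natCast_smul_le_natCast_smul r le_sup_left)
      (natCast_smul_le_natCast_smul s le_sup_right)
  rw [T.le_wedge_natCast_iff hrs]
  rw [← inv_natCast_smul_le_iff hrs] at h_le_sup
  have hg' := inv_natCast_smul_nonneg (r + s) hg
  calc _ ≤ ((r + s : ℕ) : ℝ)⁻¹ • g ⊓ (u ⊔ v) :=
        le_inf (inv_natCast_smul_le_inv_natCast_smul h_le_g) h_le_sup
    _ = ((r + s : ℕ) : ℝ)⁻¹ • g ⊓ u ⊔ ((r + s : ℕ) : ℝ)⁻¹ • g ⊓ v := inf_sup_left _ _ _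
    _ ≤ _ := sup_le (T.inf_trunc_le _ _ hg' (inv_natCast_smul_nonneg r hg))
        (T.inf_trunc_le _ _ hg' (inv_natCast_smul_nonneg s (sub_nonneg.mpr hp)))

lemma wedge_natCast_add (hg : 0 ≤ g) (r s : ℕ) :
    T.wedge g (r + s : ℕ) = T.wedge g r + T.wedge (g - T.wedge g r) s := by
  rcases eq_or_ne r 0 with rfl | hr
  · simp
  rcases eq_or_ne s 0 with rfl | hs
  · simp
  exact le_antisymm (T.wedge_natCast_add_le hg hr hs) (T.le_wedge_natCast_add hg (by omega))

end Truncation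

theorem stmt6_general {G : Type*} [AddCommGroup G] [Lattice G] [Module ℝ G]
    [CovariantClass G G (· + ·) (· ≤ ·)]
    (T : Truncation G) (g : G) (hg : 0 ≤ g) (m : ℕ) :
    T.wedge g m = ∑ n ∈ Finset.range m, T.trunc (T.ominus g n) := by
  induction m with
  | zero => simp
  | succ m ih =>
    rw [Finset.sum_range_succ, ← ih, T.wedge_natCast_add hg, T.ominus_eq_sub_wedge,
      ← T.wedge_one, Nat.cast_one]

/-- In a truncated archimedean vector lattice,
`g ∧ m = ∑_{n = 1}^{m} (g ⊖ (n - 1))‾` for every `g ≥ 0` and natural number `m`. -/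
theorem stmt6 {G : Type*} [AddCommGroup G] [Lattice G] [Module ℝ G]
    [CovariantClass G G (· + ·) (· ≤ ·)]
    (arch : ∀ g h : G, 0 ≤ g → (∀ n : ℕ, n • g ≤ h) → g = 0)
    (T : Truncation G) (g : G) (hg : 0 ≤ g) (m : ℕ) (hm : 0 < m) :
    T.wedge g m = ∑ n ∈ Finset.range m, T.trunc (T.ominus g n) :=
  stmt6_general T g hg m
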